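/- arXiv:2511.16500 — 3 statements merged into one kernel-verified Lean document; each statement's English description precedes it below -/
import Mathlib

section
/- Let ζ be a real-valued random variable and let ζ̂₁,…,ζ̂ₙ be fixed real numbers with empirical mean ζ̄ = (1/n)∑ᵢ ζ̂ᵢ. Let 𝔓̂ₙ be the empirical measure. If the support Ξ ⊆ ℝ is an interval with sup Ξ = B < ∞, then sup over all probability measures ℚ with W₁(ℚ, 𝔓̂ₙ) ≤ ε of 𝔼_ℚ[ζ] equals min{ζ̄ + ε, B}. -/
open MeasureTheory ENNReal

/-- Wasserstein-type optimal transport cost between two measures, as the infimum of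
the integral of a ground cost over all couplings. -/
noncomputable def Wcost {E : Type*} [MeasurableSpace E] (c : E → E → ℝ)
    (μ ν : Measure E) : ℝ≥0∞ :=
  ⨅ (π : Measure (E × E)) (_ : π.map Prod.fst = μ) (_ : π.map Prod.snd = ν),
    ∫⁻ z, ENNReal.ofReal (c z.1 z.2) ∂π

/-- The empirical measure of a finite sample. -/
noncomputable def empMeasure {E : Type*} [MeasurableSpace E] {n : ℕ}
    (ξ : Fin n → E) : Measure E :=
  ((n : ℝ≥0∞))⁻¹ • ∑ i, Measure.dirac (ξ i)

/-!
For a coupling `π` of `Q` with `𝔓̂ₙ`, `𝔼_Q[ζ] - ζ̄ = ∫ (x - y) dπ ≤ ∫ |x - y| dπ`, so every mean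
in the `W₁`-ball is at most `ζ̄ + ε`, and at most `B` since `Q` lives on `Ξ`. Conversely, for
`b ∈ Ξ` above all samples, moving mass `t` of `𝔓̂ₙ` to `b` costs `t (b - ζ̄)` and raises the mean
by exactly that much; the best `t ∈ [0, 1]` gives the mean `min (ζ̄ + ε) b`, and `b` can be taken
arbitrarily close to `B`.
-/

section Empirical

variable {E : Type*} [MeasurableSpace E] {n : ℕ}

lemma isProbabilityMeasure_empMeasure (hn : 0 < n) (ξ : Fin n → E) :
    IsProbabilityMeasure (empMeasure ξ) := by
  constructor
  simp only [empMeasure, Measure.smul_apply, Measure.coe_finsetSum, Finset.sum_apply,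
    measure_univ, Finset.sum_const, Finset.card_univ, Fintype.card_fin, nsmul_eq_mul, mul_one,
    smul_eq_mul]
  exact ENNReal.inv_mul_cancel (by exact_mod_cast hn.ne') (natCast_ne_top n)

lemma empMeasure_compl_eq_zero [MeasurableSingletonClass E] {ξ : Fin n → E} {A : Set E}
    (h : ∀ i, ξ i ∈ A) : empMeasure ξ Aᶜ = 0 := by
  simp [empMeasure, Measure.dirac_apply, h]

lemma integral_empMeasure [MeasurableSingletonClass E] (ξ : Fin n → E) (f : E → ℝ) :
    ∫ x, f x ∂empMeasure ξ = (∑ i, f (ξ i)) / n := by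
  rw [empMeasure, integral_smul_measure,
    integral_finsetSum_measure fun i _ => integrable_dirac enorm_lt_top]
  simp only [integral_dirac, smul_eq_mul, ENNReal.toReal_inv, ENNReal.toReal_natCast]
  exact inv_mul_eq_div _ _

lemma integrable_empMeasure [MeasurableSingletonClass E] (hn : 0 < n) (ξ : Fin n → E)
    (f : E → ℝ) : Integrable f (empMeasure ξ) := by
  rw [empMeasure, integrable_smul_measure (ENNReal.inv_ne_zero.2 (natCast_ne_top n))
    (ENNReal.inv_ne_top.2 (by exact_mod_cast hn.ne')), integrable_finsetSum_measure]
  exact fun i _ => integrable_dirac enorm_lt_top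

end Empirical

section Coupling

variable {E : Type*} [MeasurableSpace E] {c : E → E → ℝ} {μ ν : Measure E}

lemma Wcost_le_lintegral {π : Measure (E × E)} (h₁ : π.map Prod.fst = μ)
    (h₂ : π.map Prod.snd = ν) : Wcost c μ ν ≤ ∫⁻ z, ENNReal.ofReal (c z.1 z.2) ∂π :=
  iInf_le_of_le π <| by rw [iInf_pos h₁, iInf_pos h₂]

lemma exists_coupling_lt_of_Wcost_lt {r : ℝ≥0∞} (h : Wcost c μ ν < r) :
    ∃ π : Measure (E × E), π.map Prod.fst = μ ∧ π.map Prod.snd = ν ∧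
      ∫⁻ z, ENNReal.ofReal (c z.1 z.2) ∂π < r := by
  simpa only [Wcost, iInf_lt_iff, exists_prop] using h

end Coupling

section DiracMix

variable {E : Type*} [MeasurableSpace E]

noncomputable def diracMix (μ : Measure E) (t : ℝ) (b : E) : Measure E :=
  ENNReal.ofReal (1 - t) • μ + ENNReal.ofReal t • Measure.dirac b

variable {μ : Measure E} {t : ℝ} {b : E}

lemma ofReal_one_sub_add_ofReal (ht0 : 0 ≤ t) (ht1 : t ≤ 1) :
    ENNReal.ofReal (1 - t) + ENNReal.ofReal t = 1 := by
  rw [← ENNReal.ofReal_add (by linarith) ht0, sub_add_cancel, ENNReal.ofReal_one]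

lemma isProbabilityMeasure_diracMix [IsProbabilityMeasure μ] (ht0 : 0 ≤ t) (ht1 : t ≤ 1) :
    IsProbabilityMeasure (diracMix μ t b) := by
  constructor
  simp only [diracMix, Measure.add_apply, Measure.smul_apply, measure_univ, smul_eq_mul, mul_one]
  exact ofReal_one_sub_add_ofReal ht0 ht1

lemma diracMix_apply_eq_zero [MeasurableSingletonClass E] {s : Set E} (hμ : μ s = 0)
    (hb : b ∉ s) : diracMix μ t b s = 0 := by
  simp [diracMix, hμ, Measure.dirac_apply, hb]

lemma integral_diracMix [MeasurableSingletonClass E] {f : E → ℝ} (hf : Integrable f μ)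
    (ht0 : 0 ≤ t) (ht1 : t ≤ 1) :
    ∫ x, f x ∂diracMix μ t b = (1 - t) * ∫ x, f x ∂μ + t * f b := by
  rw [diracMix, integral_add_measure (hf.smul_measure ENNReal.ofReal_ne_top)
      ((integrable_dirac enorm_lt_top).smul_measure ENNReal.ofReal_ne_top),
    integral_smul_measure, integral_smul_measure, integral_dirac,
    ENNReal.toReal_ofReal (by linarith), ENNReal.toReal_ofReal ht0, smul_eq_mul, smul_eq_mul]

/-- The plan keeps mass `1 - t` of `μ` in place and sends mass `t` from `b` onto `μ`. -/
lemma Wcost_diracMix_le [IsProbabilityMeasure μ] {c : E → E → ℝ}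
    (hc : Measurable fun z : E × E => c z.1 z.2) (hc_diag : ∀ x, c x x = 0)
    (ht0 : 0 ≤ t) (ht1 : t ≤ 1) (b : E) :
    Wcost c (diracMix μ t b) μ ≤ ENNReal.ofReal t * ∫⁻ x, ENNReal.ofReal (c b x) ∂μ := by
  have hdiag : Measurable fun x : E => (x, x) := measurable_id.prodMk measurable_id
  have hfrom_b : Measurable fun x : E => (b, x) := measurable_const.prodMk measurable_id
  let π : Measure (E × E) :=
    ENNReal.ofReal (1 - t) • μ.map (fun x => (x, x)) + ENNReal.ofReal t • μ.map (fun x => (b, x))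
  have hπ₁ : π.map Prod.fst = diracMix μ t b := by
    rw [Measure.map_add _ _ measurable_fst, Measure.map_smul, Measure.map_smul,
      Measure.map_map measurable_fst hdiag, Measure.map_map measurable_fst hfrom_b]
    simp only [Function.comp_def, Measure.map_id', Measure.map_const, measure_univ, one_smul,
      diracMix]
  have hπ₂ : π.map Prod.snd = μ := by
    rw [Measure.map_add _ _ measurable_snd, Measure.map_smul, Measure.map_smul,
      Measure.map_map measurable_snd hdiag, Measure.map_map measurable_snd hfrom_b]
    simp only [Function.comp_def, Measure.map_id', ← add_smul,
      ofReal_one_sub_add_ofReal ht0 ht1, one_smul]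
  calc Wcost c (diracMix μ t b) μ ≤ ∫⁻ z, ENNReal.ofReal (c z.1 z.2) ∂π :=
        Wcost_le_lintegral hπ₁ hπ₂
    _ = ENNReal.ofReal t * ∫⁻ x, ENNReal.ofReal (c b x) ∂μ := by
        rw [lintegral_add_measure, lintegral_smul_measure, lintegral_smul_measure,
          lintegral_map hc.ennreal_ofReal hdiag, lintegral_map hc.ennreal_ofReal hfrom_b]
        simp [hc_diag]

end DiracMix

lemma exists_mul_eq_min {a d : ℝ} (ha : 0 ≤ a) (hd : 0 ≤ d) :
    ∃ t : ℝ, 0 ≤ t ∧ t ≤ 1 ∧ t * d = min a d := by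
  rcases hd.eq_or_lt with rfl | hd
  · exact ⟨0, le_rfl, zero_le_one, by simp [ha]⟩
  refine ⟨min (a / d) 1, by positivity, min_le_right _ _, ?_⟩
  rw [min_mul_of_nonneg _ _ hd.le, div_mul_cancel₀ _ hd.ne', one_mul]

section RealLine

variable {μ ν : Measure ℝ}

lemma integral_le_integral_add_of_coupling {π : Measure (ℝ × ℝ)} (h₁ : π.map Prod.fst = μ)
    (h₂ : π.map Prod.snd = ν) (hν : Integrable (fun x => x) ν)
    (hcost : ∫⁻ z, ENNReal.ofReal |z.1 - z.2| ∂π ≠ ∞) :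
    Integrable (fun x => x) μ ∧
      ∫ x, x ∂μ ≤ ∫ x, x ∂ν + (∫⁻ z, ENNReal.ofReal |z.1 - z.2| ∂π).toReal := by
  have hmeas : Measurable fun z : ℝ × ℝ => z.1 - z.2 := measurable_fst.sub measurable_snd
  have hsnd : Integrable (fun z : ℝ × ℝ => z.2) π := by
    rw [← h₂] at hν
    exact (integrable_map_measure aestronglyMeasurable_id measurable_snd.aemeasurable).1 hν
  have hdiff : Integrable (fun z : ℝ × ℝ => z.1 - z.2) π := by
    refine ⟨hmeas.aestronglyMeasurable, (hasFiniteIntegral_iff_norm _).2 ?_⟩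
    simpa only [Real.norm_eq_abs] using hcost.lt_top
  have hfst : Integrable (fun z : ℝ × ℝ => z.1) π :=
    (hdiff.add hsnd).congr (.of_forall fun z => sub_add_cancel z.1 z.2)
  have hμ_eq : ∫ x, x ∂μ = ∫ z, z.1 ∂π := by
    rw [← h₁, integral_map (f := fun x => x) measurable_fst.aemeasurable
      aestronglyMeasurable_id]
  have hν_eq : ∫ x, x ∂ν = ∫ z, z.2 ∂π := by
    rw [← h₂, integral_map (f := fun x => x) measurable_snd.aemeasurable
      aestronglyMeasurable_id]
  refine ⟨?_, ?_⟩
  · rw [← h₁]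
    exact (integrable_map_measure aestronglyMeasurable_id measurable_fst.aemeasurable).2 hfst
  calc ∫ x, x ∂μ = ∫ z, z.2 ∂π + ∫ z, z.1 - z.2 ∂π := by
        rw [hμ_eq, ← integral_add hsnd hdiff]
        simp only [add_sub_cancel]
    _ ≤ ∫ z, z.2 ∂π + ∫ z, |z.1 - z.2| ∂π :=
        add_le_add_right (integral_mono hdiff hdiff.abs fun z => le_abs_self _) _
    _ = ∫ x, x ∂ν + (∫⁻ z, ENNReal.ofReal |z.1 - z.2| ∂π).toReal := by
        rw [hν_eq, integral_eq_lintegral_of_nonneg_ae (.of_forall fun z => abs_nonneg _)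
          hmeas.abs.aestronglyMeasurable]

lemma integral_le_integral_add_of_Wcost_le (hν : Integrable (fun x => x) ν) {ε : ℝ}
    (hε : 0 ≤ ε) (hW : Wcost (fun a b => |a - b|) μ ν ≤ ENNReal.ofReal ε) :
    Integrable (fun x => x) μ ∧ ∫ x, x ∂μ ≤ ∫ x, x ∂ν + ε := by
  -- `Wcost` need not be attained, so work with couplings of cost below `ε + δ`.
  have hslack : ∀ δ > 0, Integrable (fun x => x) μ ∧ ∫ x, x ∂μ ≤ ∫ x, x ∂ν + (ε + δ) := by
    intro δ hδ
    obtain ⟨π, h₁, h₂, hlt⟩ := exists_coupling_lt_of_Wcost_lt <|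
      hW.trans_lt ((ENNReal.ofReal_lt_ofReal_iff (by linarith)).2 (lt_add_of_pos_right ε hδ))
    obtain ⟨hμ, hle⟩ := integral_le_integral_add_of_coupling h₁ h₂ hν hlt.ne_top
    exact ⟨hμ, hle.trans <| add_le_add_right
      (ENNReal.toReal_le_of_le_ofReal (by linarith) hlt.le) _⟩
  exact ⟨(hslack 1 one_pos).1, le_of_forall_pos_le_add fun δ hδ => by linarith [(hslack δ hδ).2]⟩

def wassersteinBallMeans (Ξ : Set ℝ) (ν : Measure ℝ) (ε : ℝ) : Set ℝ :=
  {r | ∃ Q : Measure ℝ, IsProbabilityMeasure Q ∧ Q Ξᶜ = 0 ∧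
    Wcost (fun a b => |a - b|) Q ν ≤ ENNReal.ofReal ε ∧ r = ∫ s, s ∂Q}

variable {Ξ : Set ℝ} {ε : ℝ}

lemma le_min_of_mem_wassersteinBallMeans (hν : Integrable (fun x => x) ν) (hε : 0 ≤ ε)
    {B : ℝ} (hB : B ∈ upperBounds Ξ) {r : ℝ} (hr : r ∈ wassersteinBallMeans Ξ ν ε) :
    r ≤ min (∫ x, x ∂ν + ε) B := by
  obtain ⟨Q, hQ, hQΞ, hW, rfl⟩ := hr
  obtain ⟨hQint, hle⟩ := integral_le_integral_add_of_Wcost_le hν hε hW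
  refine le_min hle ?_
  calc ∫ x, x ∂Q ≤ ∫ _, B ∂Q :=
        integral_mono_ae hQint (integrable_const B) (measure_mono_null (fun x hx => ?_) hQΞ)
    _ = B := by simp
  exact fun hxΞ => hx (hB hxΞ)

lemma min_mem_wassersteinBallMeans [IsProbabilityMeasure ν] (hν : Integrable (fun x => x) ν)
    (hνΞ : ν Ξᶜ = 0) (hε : 0 ≤ ε) {b : ℝ} (hbΞ : b ∈ Ξ) (hνb : ∀ᵐ x ∂ν, x ≤ b) :
    min (∫ x, x ∂ν + ε) b ∈ wassersteinBallMeans Ξ ν ε := by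
  set m := ∫ x, x ∂ν
  have hmb : m ≤ b := by
    simpa using integral_mono_ae hν (integrable_const b) hνb
  obtain ⟨t, ht0, ht1, ht⟩ := exists_mul_eq_min hε (sub_nonneg.2 hmb)
  have hcost : ∫⁻ x, ENNReal.ofReal |b - x| ∂ν = ENNReal.ofReal (b - m) := by
    have habs : (fun x => ENNReal.ofReal |b - x|) =ᵐ[ν] fun x => ENNReal.ofReal (b - x) :=
      hνb.mono fun x hx => by simp only [abs_of_nonneg (sub_nonneg.2 hx)]
    have hsub : ∫ x, (b - x) ∂ν = b - m := by
      rw [integral_sub (integrable_const b) hν, integral_const, probReal_univ, one_smul]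
    rw [lintegral_congr_ae habs, ← hsub, ofReal_integral_eq_lintegral_ofReal
      (f := fun x => b - x) ((integrable_const b).sub hν) (hνb.mono fun x hx => sub_nonneg.2 hx)]
  refine ⟨diracMix ν t b, isProbabilityMeasure_diracMix ht0 ht1,
    diracMix_apply_eq_zero hνΞ (not_not.2 hbΞ), ?_, ?_⟩
  · calc Wcost (fun a b => |a - b|) (diracMix ν t b) ν
          ≤ ENNReal.ofReal t * ∫⁻ x, ENNReal.ofReal |b - x| ∂ν :=
          Wcost_diracMix_le (measurable_fst.sub measurable_snd).abs (by simp) ht0 ht1 b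
      _ = ENNReal.ofReal (t * (b - m)) := by rw [hcost, ENNReal.ofReal_mul ht0]
      _ ≤ ENNReal.ofReal ε := ENNReal.ofReal_le_ofReal (ht ▸ min_le_left _ _)
  · rw [integral_diracMix hν ht0 ht1]
    calc min (m + ε) b = m + min ε (b - m) := by rw [← min_add_add_left, add_sub_cancel]
      _ = (1 - t) * m + t * b := by rw [← ht]; ring

end RealLine

theorem robust_mean_bounded_interval_general {n : ℕ} (hn : 0 < n)
    (Ξ : Set ℝ) (B : ℝ) (hB : IsLUB Ξ B)
    (ζ : Fin n → ℝ) (hζ : ∀ i, ζ i ∈ Ξ) (ε : ℝ) (hε : 0 < ε) :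
    sSup {r : ℝ | ∃ Q : Measure ℝ, IsProbabilityMeasure Q ∧ Q Ξᶜ = 0 ∧
        Wcost (fun a b => |a - b|) Q (empMeasure ζ) ≤ ENNReal.ofReal ε ∧
        r = ∫ s, s ∂Q} =
      min ((∑ i, ζ i) / n + ε) B := by
  have := isProbabilityMeasure_empMeasure hn ζ
  have hν := integrable_empMeasure hn ζ fun x => x
  have hdominates : ∀ b, (∀ i, ζ i ≤ b) → ∀ᵐ x ∂empMeasure ζ, x ≤ b := fun b hb =>
    empMeasure_compl_eq_zero (A := Set.Iic b) hb
  have hmem : ∀ b ∈ Ξ, (∀ i, ζ i ≤ b) →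
      min ((∑ i, ζ i) / n + ε) b ∈ wassersteinBallMeans Ξ (empMeasure ζ) ε := fun b hbΞ hb => by
    simpa only [integral_empMeasure] using min_mem_wassersteinBallMeans hν
      (empMeasure_compl_eq_zero hζ) hε.le hbΞ (hdominates b hb)
  obtain ⟨iM, -, hiM⟩ := Finset.exists_max_image Finset.univ ζ ⟨⟨0, hn⟩, Finset.mem_univ _⟩
  refine csSup_eq_of_forall_le_of_forall_lt_exists_gt
    ⟨_, hmem _ (hζ iM) fun i => hiM i (Finset.mem_univ i)⟩ (fun r hr => ?_) fun w hw => ?_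
  · simpa only [integral_empMeasure] using
      le_min_of_mem_wassersteinBallMeans hν hε.le hB.1 hr
  · obtain ⟨x, hxΞ, hwx, -⟩ := hB.exists_between (hw.trans_le (min_le_right _ _))
    refine ⟨_, hmem (max x (ζ iM)) (max_rec' (· ∈ Ξ) hxΞ (hζ iM))
      fun i => (hiM i (Finset.mem_univ i)).trans (le_max_right _ _), ?_⟩
    exact lt_min (lt_min_iff.1 hw).1 (hwx.trans_le (le_max_left _ _))

/-- The 1-Wasserstein robust mean over a bounded-above interval support:
`sup { 𝔼_Q[ζ] : Q prob. measure on Ξ, W₁(Q, 𝔓̂ₙ) ≤ ε } = min (ζ̄ + ε) B`. -/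
theorem robust_mean_bounded_interval {n : ℕ} (hn : 0 < n)
    (Ξ : Set ℝ) (hΞ : Ξ.OrdConnected) (B : ℝ) (hB : IsLUB Ξ B)
    (ζ : Fin n → ℝ) (hζ : ∀ i, ζ i ∈ Ξ) (ε : ℝ) (hε : 0 < ε) :
    sSup {r : ℝ | ∃ Q : Measure ℝ, IsProbabilityMeasure Q ∧ Q Ξᶜ = 0 ∧
        Wcost (fun a b => |a - b|) Q (empMeasure ζ) ≤ ENNReal.ofReal ε ∧
        r = ∫ s, s ∂Q} =
      min ((∑ i, ζ i) / n + ε) B :=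
  robust_mean_bounded_interval_general hn Ξ B hB ζ hζ ε hε
end

section
/- Under the assumptions v > g, b ≥ 0, b ≥ v−g (componentwise), the Lipschitz modulus of ξ ↦ F(x,ξ) with respect to the ℓ₂-norm, i.e. the supremum of ‖φ‖₂ over all subgradients φ ∈ ∂_ξ F(x,ξ) over all ξ ∈ ℝ₊^d, equals ‖b‖₂ for every fixed x. -/
open Finset

/-- Euclidean norm of a vector in `ℝᵈ`. -/
noncomputable def enorm2 {d : ℕ} (φ : Fin d → ℝ) : ℝ := Real.sqrt (∑ i, (φ i) ^ 2)

lemma nv_key {d : ℕ} (c v g b x : Fin d → ℝ)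
    (F : (Fin d → ℝ) → ℝ)
    (hF : ∀ ξ, F ξ = (∑ i, (c i - g i) * x i) + (∑ i, b i * ξ i) +
        ∑ i, (g i - v i - b i) * min (x i) (ξ i))
    (ξ φ : Fin d → ℝ)
    (h : ∀ y : Fin d → ℝ, F ξ + ∑ i, φ i * (y i - ξ i) ≤ F y)
    (i : Fin d) (s : ℝ) :
    φ i * (s - ξ i) ≤ b i * (s - ξ i) +
      (g i - v i - b i) * (min (x i) s - min (x i) (ξ i)) := by
  have hsplit : ∀ f : Fin d → ℝ → ℝ,
      ∑ j, f j (Function.update ξ i s j) - ∑ j, f j (ξ j) = f i s - f i (ξ i) := by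
    intro f
    rw [Fintype.sum_eq_add_sum_compl i, Fintype.sum_eq_add_sum_compl i (fun j => f j (ξ j))]
    have hc : ∑ j ∈ {i}ᶜ, f j (Function.update ξ i s j) = ∑ j ∈ {i}ᶜ, f j (ξ j) := by
      refine Finset.sum_congr rfl (fun j hj => ?_)
      rw [Function.update_of_ne (by simpa using hj)]
    rw [Function.update_self, hc]; ring
  have hφ : ∑ j, φ j * (Function.update ξ i s j - ξ j) = φ i * (s - ξ i) := by
    have := hsplit (fun j t => φ j * (t - ξ j))
    simpa using this
  have h1 := h (Function.update ξ i s)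
  rw [hF, hF, hφ] at h1
  have h2 := hsplit (fun j t => b j * t)
  have h3 := hsplit (fun j t => (g j - v j - b j) * min (x j) t)
  linarith

/-- The Lipschitz modulus of the newsvendor cost `ξ ↦ F(x,ξ)` with respect to the ℓ₂-norm,
i.e. the supremum of `‖φ‖₂` over all subgradients `φ ∈ ∂_ξ F(x,ξ)` over all `ξ ∈ ℝ₊ᵈ`,
equals `‖b‖₂`. -/
theorem newsvendor_lipschitz_modulus {d : ℕ} (c v g b x : Fin d → ℝ)
    (hvg : ∀ i, g i < v i) (hb : ∀ i, 0 ≤ b i) (hbvg : ∀ i, v i - g i ≤ b i)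
    (hx : ∀ i, 0 ≤ x i)
    (F : (Fin d → ℝ) → ℝ)
    (hF : ∀ ξ, F ξ = (∑ i, (c i - g i) * x i) + (∑ i, b i * ξ i) +
        ∑ i, (g i - v i - b i) * min (x i) (ξ i)) :
    sSup {r : ℝ | ∃ ξ φ : Fin d → ℝ, (∀ i, 0 ≤ ξ i) ∧
        (∀ y : Fin d → ℝ, F ξ + ∑ i, φ i * (y i - ξ i) ≤ F y) ∧
        r = enorm2 φ} = enorm2 b := by
  set S := {r : ℝ | ∃ ξ φ : Fin d → ℝ, (∀ i, 0 ≤ ξ i) ∧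
      (∀ y : Fin d → ℝ, F ξ + ∑ i, φ i * (y i - ξ i) ≤ F y) ∧
      r = enorm2 φ} with hS
  -- membership: ξ = x + 1, φ = b
  have hmem : enorm2 b ∈ S := by
    refine ⟨fun i => x i + 1, b, fun i => by dsimp only; linarith [hx i], ?_, rfl⟩
    intro y
    rw [hF, hF]
    have hmin : ∀ i, min (x i) (x i + 1) = x i := fun i => min_eq_left (by linarith)
    have hterm : ∀ i ∈ Finset.univ,
        (g i - v i - b i) * min (x i) (x i + 1) ≤ (g i - v i - b i) * min (x i) (y i) := by
      intro i _
      rw [hmin i]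
      apply mul_le_mul_of_nonpos_left (min_le_left _ _)
      have := hvg i; have := hbvg i; have := hb i; linarith
    have hsum := Finset.sum_le_sum hterm
    have hbsum : ∑ i, b i * (y i - (x i + 1)) =
        ∑ i, b i * y i - ∑ i, b i * (x i + 1) := by
      rw [← Finset.sum_sub_distrib]; exact Finset.sum_congr rfl (fun i _ => by ring)
    linarith
  -- upper bound
  have hub : ∀ r ∈ S, r ≤ enorm2 b := by
    rintro r ⟨ξ, φ, hξ, h, rfl⟩
    have hbound : ∀ i, (φ i) ^ 2 ≤ (b i) ^ 2 := by
      intro i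
      have hup := nv_key c v g b x F hF ξ φ h i (ξ i + 1)
      have hdn := nv_key c v g b x F hF ξ φ h i (ξ i - 1)
      simp only [add_sub_cancel_left] at hup
      have hmono : min (x i) (ξ i) ≤ min (x i) (ξ i + 1) :=
        min_le_min le_rfl (by linarith)
      have hcoef : g i - v i - b i ≤ 0 := by
        have := hvg i; have := hb i; linarith
      have h1 : φ i ≤ b i := by
        nlinarith [mul_nonpos_of_nonpos_of_nonneg hcoef (by linarith : (0:ℝ) ≤ min (x i) (ξ i + 1) - min (x i) (ξ i))]
      have hΔ : min (x i) (ξ i) - min (x i) (ξ i - 1) ≤ 1 := by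
        rcases le_total (x i) (ξ i - 1) with hle | hle
        · rw [min_eq_left hle, min_eq_left (by linarith : x i ≤ ξ i)]; linarith
        · rw [min_eq_right hle]
          have := min_le_right (x i) (ξ i); linarith
      have hΔ0 : 0 ≤ min (x i) (ξ i) - min (x i) (ξ i - 1) :=
        sub_nonneg.mpr (min_le_min le_rfl (by linarith))
      have h2 : g i - v i ≤ φ i := by nlinarith
      have := hvg i; have := hbvg i; have := hb i
      exact sq_le_sq' (by linarith) h1
    unfold enorm2
    exact Real.sqrt_le_sqrt (Finset.sum_le_sum (fun i _ => hbound i))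
  exact le_antisymm (csSup_le ⟨_, hmem⟩ hub) (le_csSup ⟨_, hub⟩ hmem)
end

section
/- Let A ≤ ζ̂ᵢ ≤ B with A, B finite, and λ ≥ 0. Then sup over ζ ∈ (A,B) of (ζ − λ|ζ − ζ̂ᵢ|) equals ζ̂ᵢ if λ ≥ 1, and equals (ζ̂ᵢ − B)λ + B if λ < 1. -/
/-- For `ζ̂ᵢ ∈ [A,B]` and `λ ≥ 0`,
`sup_{ζ ∈ (A,B)} (ζ − λ|ζ − ζ̂ᵢ|)` equals `ζ̂ᵢ` if `λ ≥ 1` and `(ζ̂ᵢ − B)λ + B`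
if `λ < 1`. -/
theorem sup_on_bounded_interval (A B zhat lam : ℝ) (hAB : A < B)
    (hz : zhat ∈ Set.Icc A B) (hlam : 0 ≤ lam) :
    sSup ((fun z : ℝ => z - lam * |z - zhat|) '' Set.Ioo A B) =
      if 1 ≤ lam then zhat else (zhat - B) * lam + B := by
  have hne : (Set.Ioo A B).Nonempty := Set.nonempty_Ioo.2 hAB
  set f : ℝ → ℝ := fun z => z - lam * |z - zhat| with hf
  have hcont : Continuous f := by
    apply Continuous.sub continuous_id
    exact continuous_const.mul ((continuous_id.sub continuous_const).abs)
  have key : ∀ p ∈ Set.Icc A B, (∀ z ∈ Set.Ioo A B, f z ≤ f p) →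
      sSup (f '' Set.Ioo A B) = f p := by
    intro p hp hub
    apply IsLUB.csSup_eq _ (hne.image f)
    constructor
    · rintro _ ⟨z, hzz, rfl⟩; exact hub z hzz
    · intro b hb
      have hcl : p ∈ closure (Set.Ioo A B) := by
        rw [closure_Ioo hAB.ne]; exact hp
      have hne' : (nhdsWithin p (Set.Ioo A B)).NeBot :=
        mem_closure_iff_nhdsWithin_neBot.1 hcl
      have htd : Filter.Tendsto f (nhdsWithin p (Set.Ioo A B)) (nhds (f p)) :=
        (hcont.tendsto p).mono_left nhdsWithin_le_nhds
      refine le_of_tendsto htd ?_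
      filter_upwards [self_mem_nhdsWithin] with z hzz
      exact hb ⟨z, hzz, rfl⟩
  have hA := hz.1
  have hB := hz.2
  split_ifs with h
  · have hres := key zhat hz ?_
    · simpa [f, sub_self, abs_zero] using hres
    · intro z hz'
      have h1 : z - zhat ≤ lam * |z - zhat| :=
        (le_abs_self _).trans (le_mul_of_one_le_left (abs_nonneg _) h)
      simp only [f, sub_self, abs_zero, mul_zero, sub_zero]
      linarith
  · have hfB : f B = (1 - lam) * B + lam * zhat := by
      have habs : |B - zhat| = B - zhat := abs_of_nonneg (by linarith)
      simp only [f, habs]; ring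
    have hres := key B (Set.right_mem_Icc.2 hAB.le) ?_
    · rw [hres, hfB]; ring
    · intro z hz'
      rcases le_or_gt z zhat with hle | hlt
      · have habs : |z - zhat| = zhat - z := by
          rw [abs_sub_comm]; exact abs_of_nonneg (by linarith)
        rw [hfB]; simp only [f, habs]
        nlinarith [hz'.2]
      · have habs : |z - zhat| = z - zhat := abs_of_nonneg (by linarith)
        rw [hfB]; simp only [f, habs]
        nlinarith [hz'.2]
end
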